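/- arXiv:math/0501373 — 2 statements merged into one kernel-verified Lean document; each statement's English description precedes it below -/
import Mathlib

section
/- Let A be an upper continuous complete lattice. Then the lattice Sp(A) of algebraic subsets of A (subsets closed under arbitrary meets, containing the top by the empty meet, and closed under nonempty up-directed joins), ordered by inclusion, is join-semidistributive: X ∨ Y = X ∨ Z implies X ∨ Y = X ∨ (Y ∧ Z) for all X, Y, Z ∈ Sp(A). -/
/-- A subset of a complete lattice is *algebraic* if it is closed under arbitrary
meets (in particular it contains the top, as the empty meet) and under joins of
nonempty up-directed subsets. -/
def IsAlgebraicSubset {A : Type*} [CompleteLattice A] (X : Set A) : Prop :=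
  (∀ S : Set A, S ⊆ X → sInf S ∈ X) ∧
    (∀ S : Set A, S ⊆ X → S.Nonempty → DirectedOn (· ≤ ·) S → sSup S ∈ X)

/-- `Sp A`: the lattice of algebraic subsets of a complete lattice `A`,
ordered by inclusion. -/
def Sp (A : Type*) [CompleteLattice A] : Type _ :=
  {X : Set A // IsAlgebraicSubset X}

namespace Sp

variable {A : Type*} [CompleteLattice A]

instance : PartialOrder (Sp A) := Subtype.partialOrder _

instance : InfSet (Sp A) :=
  ⟨fun 𝒮 => ⟨⋂ X ∈ 𝒮, X.val, by
    constructor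
    · intro S hS
      simp only [Set.mem_iInter]
      intro X hX
      exact X.2.1 S (hS.trans (Set.biInter_subset_of_mem hX))
    · intro S hS hne hdir
      simp only [Set.mem_iInter]
      intro X hX
      exact X.2.2 S (hS.trans (Set.biInter_subset_of_mem hX)) hne hdir⟩⟩

noncomputable instance : CompleteLattice (Sp A) :=
  completeLatticeOfInf (Sp A) (by
    intro 𝒮
    constructor
    · intro X hX
      show (sInf 𝒮).val ⊆ X.val
      exact Set.biInter_subset_of_mem hX
    · intro Y hY
      show Y.val ⊆ (sInf 𝒮).val
      exact Set.subset_iInter₂ fun X hX => hY hX)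

end Sp

/-!
For `X ∈ Sp A` write `cX a` for the least element of `X` above `a`. Upper continuity makes
`{a | cX a ⊓ cZ a ≤ a}` algebraic, so every `a ∈ X ⊔ Z` equals `cX a ⊓ cZ a`.
Now let `X ⊔ Y = X ⊔ Z` and `y ∈ Y`. Closing alternately in `Z` and in `Y` gives a chain
`y ≤ cZ y ≤ cY (cZ y) ≤ …` whose terms lie alternately in `Y ⊆ X ⊔ Z` and `Z ⊆ X ⊔ Y`;
the two decompositions show inductively that `cX y` meets every term of the chain below `y`.
By upper continuity the join `p` of the chain, which lies in `Y ∩ Z`, then satisfies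
`y = cX y ⊓ p ∈ X ⊔ (Y ⊓ Z)`.
-/

open ClosureOperator

section

variable {A : Type*} [CompleteLattice A]

def IsUpperContinuous (A : Type*) [CompleteLattice A] : Prop :=
  ∀ (x : A) (D : Set A), D.Nonempty → DirectedOn (· ≤ ·) D → x ⊓ sSup D = ⨆ d ∈ D, x ⊓ d

namespace IsUpperContinuous

theorem inf_iSup_eq (hUC : IsUpperContinuous A) {ι : Type*} [Nonempty ι] {f : ι → A}
    (hf : Directed (· ≤ ·) f) (x : A) : x ⊓ ⨆ i, f i = ⨆ i, x ⊓ f i := by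
  rw [iSup, hUC x _ (Set.range_nonempty f) hf.directedOn_range, iSup_range]

theorem sSup_image_inf_sSup_image_le (hUC : IsUpperContinuous A) {D : Set A}
    (hne : D.Nonempty) (hdir : DirectedOn (· ≤ ·) D) {f g : A → A}
    (hf : Monotone f) (hg : Monotone g) :
    sSup (f '' D) ⊓ sSup (g '' D) ≤ ⨆ d ∈ D, f d ⊓ g d := by
  rw [hUC _ _ (hne.image g) (hdir.mono_comp hg), iSup_image]
  refine iSup₂_le fun d hd => ?_
  rw [inf_comm, hUC _ _ (hne.image f) (hdir.mono_comp hf), iSup_image]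
  refine iSup₂_le fun d' hd' => ?_
  obtain ⟨e, he, hde, hd'e⟩ := hdir d hd d' hd'
  exact le_iSup₂_of_le e he (le_inf (inf_le_right.trans (hf hd'e)) (inf_le_left.trans (hg hde)))

end IsUpperContinuous

def zigzag (c d : ClosureOperator A) (y : A) : ℕ → A
  | 0 => y
  | n + 1 => c (d (zigzag c d y n))

theorem monotone_zigzag (c d : ClosureOperator A) (y : A) : Monotone (zigzag c d y) :=
  monotone_nat_of_le_succ fun _ => (d.le_closure _).trans (c.le_closure _)

theorem iSup_closure_zigzag (c d : ClosureOperator A) (y : A) :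
    ⨆ n, d (zigzag c d y n) = ⨆ n, zigzag c d y n :=
  le_antisymm (iSup_le fun n => le_iSup_of_le (n + 1) (c.le_closure _))
    (iSup_mono fun _ => d.le_closure _)

theorem isClosed_zigzag {c : ClosureOperator A} (d : ClosureOperator A) {y : A}
    (hy : c.IsClosed y) : ∀ n, c.IsClosed (zigzag c d y n)
  | 0 => hy
  | _ + 1 => c.isClosed_closure _

theorem closure_inf_zigzag_le (cX c d : ClosureOperator A)
    (hc : ∀ a, c.IsClosed a → cX a ⊓ d a ≤ a) (hd : ∀ b, d.IsClosed b → cX b ⊓ c b ≤ b)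
    {y : A} (hy : c.IsClosed y) (n : ℕ) : cX y ⊓ zigzag c d y n ≤ y := by
  induction n with
  | zero => exact inf_le_right
  | succ n ih =>
    set v := zigzag c d y n
    have hyv : y ≤ v := monotone_zigzag c d y (Nat.zero_le n)
    calc cX y ⊓ c (d v) ≤ cX y ⊓ (cX (d v) ⊓ c (d v)) :=
          le_inf inf_le_left (inf_le_inf_right _ (cX.monotone (hyv.trans (d.le_closure v))))
      _ ≤ cX y ⊓ d v := inf_le_inf_left _ (hd _ (d.isClosed_closure v))
      _ ≤ cX y ⊓ (cX v ⊓ d v) := le_inf inf_le_left (inf_le_inf_right _ (cX.monotone hyv))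
      _ ≤ cX y ⊓ v := inf_le_inf_left _ (hc v (isClosed_zigzag d hy n))
      _ ≤ y := ih

namespace Sp

theorem mem_inf {Y Z : Sp A} {a : A} : a ∈ (Y ⊓ Z).val ↔ a ∈ Y.val ∧ a ∈ Z.val := by
  show a ∈ ⋂ X ∈ ({Y, Z} : Set (Sp A)), X.val ↔ _
  simp

theorem inf_mem (X : Sp A) {a b : A} (ha : a ∈ X.val) (hb : b ∈ X.val) : a ⊓ b ∈ X.val := by
  rw [← sInf_pair]
  exact X.2.1 _ (Set.pair_subset ha hb)

def closure (X : Sp A) : ClosureOperator A :=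
  ofCompletePred (· ∈ X.val) fun s hs => X.2.1 s hs

theorem closure_mem (X : Sp A) (a : A) : X.closure a ∈ X.val := X.closure.isClosed_closure a

theorem closure_sSup_le (X : Sp A) {D : Set A} (hne : D.Nonempty)
    (hdir : DirectedOn (· ≤ ·) D) : X.closure (sSup D) ≤ sSup (X.closure '' D) :=
  closure_min (sSup_le fun d hd => le_sSup_of_le (Set.mem_image_of_mem _ hd) (le_closure _ d))
    (X.2.2 _ (Set.image_subset_iff.2 fun d _ => X.closure_mem d) (hne.image _)
      (hdir.mono_comp X.closure.monotone))

theorem isAlgebraicSubset_setOf_closure_inf_closure_le (hUC : IsUpperContinuous A)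
    (X Z : Sp A) : IsAlgebraicSubset {a | X.closure a ⊓ Z.closure a ≤ a} := by
  refine ⟨fun T hT => le_sInf fun t ht => ?_, fun D hD hne hdir => ?_⟩
  · exact (inf_le_inf (X.closure.monotone (sInf_le ht)) (Z.closure.monotone (sInf_le ht))).trans
      (hT ht)
  · calc X.closure (sSup D) ⊓ Z.closure (sSup D)
        ≤ sSup (X.closure '' D) ⊓ sSup (Z.closure '' D) :=
          inf_le_inf (X.closure_sSup_le hne hdir) (Z.closure_sSup_le hne hdir)
      _ ≤ ⨆ d ∈ D, X.closure d ⊓ Z.closure d :=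
          hUC.sSup_image_inf_sSup_image_le hne hdir X.closure.monotone Z.closure.monotone
      _ ≤ sSup D := iSup₂_le fun d hd => (hD hd).trans (le_sSup hd)

theorem closure_inf_closure_le_of_mem_sup (hUC : IsUpperContinuous A) {X Z : Sp A} {a : A}
    (ha : a ∈ (X ⊔ Z).val) : X.closure a ⊓ Z.closure a ≤ a := by
  let S : Sp A := ⟨_, isAlgebraicSubset_setOf_closure_inf_closure_le hUC X Z⟩
  have hXS : X ≤ S := fun x hx => inf_le_left.trans (closure_min le_rfl hx)
  have hZS : Z ≤ S := fun z hz => inf_le_right.trans (closure_min le_rfl hz)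
  exact sup_le hXS hZS ha

theorem exists_eq_closure_inf_of_sup_eq (hUC : IsUpperContinuous A) {X Y Z : Sp A}
    (h : X ⊔ Y = X ⊔ Z) {y : A} (hy : y ∈ Y.val) :
    ∃ p ∈ (Y ⊓ Z).val, y = X.closure y ⊓ p := by
  have hY (a : A) (ha : Y.closure.IsClosed a) : X.closure a ⊓ Z.closure a ≤ a :=
    closure_inf_closure_le_of_mem_sup hUC ((h ▸ le_sup_right : Y ≤ X ⊔ Z) ha)
  have hZ (b : A) (hb : Z.closure.IsClosed b) : X.closure b ⊓ Y.closure b ≤ b :=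
    closure_inf_closure_le_of_mem_sup hUC ((h ▸ le_sup_right : Z ≤ X ⊔ Y) hb)
  set v := zigzag Y.closure Z.closure y
  have hv : Monotone v := monotone_zigzag _ _ y
  refine ⟨⨆ n, v n, mem_inf.2 ⟨?_, ?_⟩, le_antisymm (le_inf (le_closure _ y) (le_iSup v 0)) ?_⟩
  · exact Y.2.2 _ (Set.range_subset_iff.2 (isClosed_zigzag (c := Y.closure) _ hy))
      (Set.range_nonempty v) hv.directed_le.directedOn_range
  · rw [← iSup_closure_zigzag]
    exact Z.2.2 _ (Set.range_subset_iff.2 fun n => Z.closure_mem (v n)) (Set.range_nonempty _)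
      (Z.closure.monotone.comp hv).directed_le.directedOn_range
  · rw [hUC.inf_iSup_eq hv.directed_le]
    exact iSup_le (closure_inf_zigzag_le _ _ _ hY hZ hy)

end Sp

end

/-- If `A` is an upper continuous complete lattice, then the lattice `Sp A` of
algebraic subsets of `A` is join-semidistributive. -/
theorem sp_joinSemidistributive {A : Type*} [CompleteLattice A]
    (hUC : ∀ (x : A) (D : Set A), D.Nonempty → DirectedOn (· ≤ ·) D →
      x ⊓ sSup D = ⨆ d ∈ D, x ⊓ d) :
    ∀ X Y Z : Sp A, X ⊔ Y = X ⊔ Z → X ⊔ Y = X ⊔ (Y ⊓ Z) := by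
  intro X Y Z h
  refine le_antisymm (sup_le le_sup_left fun y hy => ?_) (sup_le_sup_left inf_le_left X)
  obtain ⟨p, hp, hyp⟩ := Sp.exists_eq_closure_inf_of_sup_eq hUC h hy
  rw [hyp]
  exact Sp.inf_mem _ ((le_sup_left : X ≤ X ⊔ (Y ⊓ Z)) (X.closure_mem _))
    ((le_sup_right : Y ⊓ Z ≤ X ⊔ (Y ⊓ Z)) hp)
end

section
/- Let B be a complete Boolean algebra. Then the lattice Sp(B) of algebraic subsets of B is subdirectly irreducible: it has a smallest nonzero lattice congruence, namely the principal congruence collapsing the bottom element {1} with the atom {0,1}. -/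
/-- A lattice congruence: an equivalence relation compatible with `⊔` and `⊓`. -/
structure LatCon (L : Type*) [Lattice L] where
  r : L → L → Prop
  iseqv : Equivalence r
  sup_comp : ∀ a b c d : L, r a b → r c d → r (a ⊔ c) (b ⊔ d)
  inf_comp : ∀ a b c d : L, r a b → r c d → r (a ⊓ c) (b ⊓ d)

namespace Sp

variable {A : Type*} [CompleteLattice A]

theorem top_mem (X : Sp A) : ⊤ ∈ X.val := by
  simpa using X.2.1 ∅ (Set.empty_subset _)

theorem val_inf (X Y : Sp A) : (X ⊓ Y).val = X.val ∩ Y.val := by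
  show (⋂ Z ∈ ({X, Y} : Set (Sp A)), Z.val) = _
  simp

theorem inf_mem_sup {X Y : Sp A} {a b : A} (ha : a ∈ X.val) (hb : b ∈ Y.val) :
    a ⊓ b ∈ (X ⊔ Y).val := by
  rw [← sInf_pair]
  exact (X ⊔ Y).2.1 _ (Set.pair_subset (le_sup_left (a := X) ha) (le_sup_right (b := Y) hb))

theorem isAlgebraicSubset_pair_top (a : A) : IsAlgebraicSubset ({a, ⊤} : Set A) := by
  refine ⟨fun S hS => ?_, fun S hS hne _ => ?_⟩
  · rcases Set.subset_pair_iff_eq.mp hS with rfl | rfl | rfl | rfl <;> simp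
  · rcases hne.subset_pair_iff_eq.mp hS with rfl | rfl | rfl <;> simp

/-- `U_a = {a, ⊤}`: an atom of `Sp A`, except that `U_⊤ = ⊥`. -/
def atom (a : A) : Sp A := ⟨{a, ⊤}, isAlgebraicSubset_pair_top a⟩

theorem atom_le_iff {a : A} {X : Sp A} : atom a ≤ X ↔ a ∈ X.val := by
  show {a, ⊤} ⊆ X.val ↔ _
  simp [Set.insert_subset_iff, top_mem X]

theorem self_mem_atom (a : A) : a ∈ (atom a).val := Set.mem_insert a _

theorem bot_eq_atom_top : (⊥ : Sp A) = atom ⊤ :=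
  le_antisymm bot_le (atom_le_iff.mpr (top_mem ⊥))

theorem val_bot : (⊥ : Sp A).val = {⊤} := by
  simp [bot_eq_atom_top, atom]

theorem atom_inf_eq_bot {a : A} {X : Sp A} (ha : a ∉ X.val) : atom a ⊓ X = ⊥ := by
  refine Subtype.ext ?_
  rw [val_inf, val_bot]
  show {a, ⊤} ∩ X.val = {⊤}
  rw [Set.insert_inter_of_notMem ha, Set.singleton_inter_of_mem (top_mem X)]

theorem bot_ne_atom {a : A} (ha : a ≠ ⊤) : ⊥ ≠ atom a := by
  intro h
  have ha' := self_mem_atom a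
  rw [← h, val_bot] at ha'
  exact ha ha'

end Sp

namespace LatCon

section

variable {L : Type*} [Lattice L]

theorem inf_left (θ : LatCon L) (z : L) {x y : L} (h : θ.r x y) : θ.r (z ⊓ x) (z ⊓ y) :=
  θ.inf_comp _ _ _ _ (θ.iseqv.refl z) h

theorem sup_left (θ : LatCon L) (z : L) {x y : L} (h : θ.r x y) : θ.r (z ⊔ x) (z ⊔ y) :=
  θ.sup_comp _ _ _ _ (θ.iseqv.refl z) h

def principal (a b : L) : LatCon L where
  r x y := ∀ θ : LatCon L, θ.r a b → θ.r x y
  iseqv :=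
    ⟨fun x θ _ => θ.iseqv.refl x, fun h θ hab => θ.iseqv.symm (h θ hab),
      fun h h' θ hab => θ.iseqv.trans (h θ hab) (h' θ hab)⟩
  sup_comp _ _ _ _ h h' θ hab := θ.sup_comp _ _ _ _ (h θ hab) (h' θ hab)
  inf_comp _ _ _ _ h h' θ hab := θ.inf_comp _ _ _ _ (h θ hab) (h' θ hab)

theorem principal_rel_self (a b : L) : (principal a b).r a b := fun _ h => h

theorem rel_of_principal_rel {θ : LatCon L} {a b x y : L} (hab : θ.r a b)
    (h : (principal a b).r x y) : θ.r x y :=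
  h θ hab

end

section

open Sp

variable {A : Type*} [CompleteLattice A] (θ : LatCon (Sp A))

theorem rel_bot_atom_of_mem_of_notMem {X Y : Sp A} {a : A} (h : θ.r X Y) (haX : a ∈ X.val)
    (haY : a ∉ Y.val) : θ.r ⊥ (atom a) := by
  have h' := θ.inf_left (atom a) h
  rw [inf_eq_left.mpr (atom_le_iff.mpr haX), atom_inf_eq_bot haY] at h'
  exact θ.iseqv.symm h'

theorem rel_bot_atom_bot_of_disjoint {a b : A} (h : θ.r ⊥ (atom a)) (hab : Disjoint b a)
    (hb : b ≠ ⊥) : θ.r ⊥ (atom ⊥) := by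
  have h' := θ.inf_left (atom ⊥) (θ.sup_left (atom b) h)
  have hbot_notMem : ⊥ ∉ (atom b).val := by
    rintro (hb' | htop)
    · exact hb hb'.symm
    · exact ne_bot_of_le_ne_bot hb le_top htop.symm
  have hbot_mem : ⊥ ∈ (atom b ⊔ atom a).val :=
    hab.eq_bot ▸ inf_mem_sup (self_mem_atom b) (self_mem_atom a)
  rwa [sup_bot_eq, atom_inf_eq_bot hbot_notMem, inf_eq_left.mpr (atom_le_iff.mpr hbot_mem)] at h'

end

theorem rel_bot_atom_bot_of_ne {B : Type*} [CompleteBooleanAlgebra B]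
    (θ : LatCon (Sp B)) {X Y : Sp B} (hXY : X ≠ Y) (h : θ.r X Y) : θ.r ⊥ (Sp.atom ⊥) := by
  wlog hYX : ¬X ≤ Y generalizing X Y
  · exact this hXY.symm (θ.iseqv.symm h) fun hXY' => hXY (le_antisymm (not_not.mp hYX) hXY')
  obtain ⟨a, haX, haY⟩ := Set.not_subset.mp hYX
  have ha : a ≠ ⊤ := fun ha => haY (ha ▸ Sp.top_mem Y)
  exact θ.rel_bot_atom_bot_of_disjoint (θ.rel_bot_atom_of_mem_of_notMem h haX haY)
    disjoint_compl_left (compl_eq_bot.not.mpr ha)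

end LatCon

/-- For a nontrivial complete Boolean algebra `B`, the lattice `Sp B` of algebraic
subsets of `B` is subdirectly irreducible: it has a smallest nonzero congruence,
namely the principal congruence `Θ(⊥, U₀)` collapsing the bottom element of
`Sp B` with the atom `U₀ = {⊥, ⊤}`. -/
theorem sp_subdirectlyIrreducible {B : Type*} [CompleteBooleanAlgebra B] [Nontrivial B] :
    ∃ θ : LatCon (Sp B),
      (∃ U₀ : Sp B, U₀.val = {⊥, ⊤} ∧ θ.r ⊥ U₀ ∧
        ∀ θ' : LatCon (Sp B), θ'.r ⊥ U₀ → ∀ X Y : Sp B, θ.r X Y → θ'.r X Y) ∧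
      (∃ X Y : Sp B, X ≠ Y ∧ θ.r X Y) ∧
      ∀ θ' : LatCon (Sp B), (∃ X Y : Sp B, X ≠ Y ∧ θ'.r X Y) →
        ∀ X Y : Sp B, θ.r X Y → θ'.r X Y := by
  refine ⟨LatCon.principal ⊥ (Sp.atom ⊥),
    ⟨Sp.atom ⊥, rfl, LatCon.principal_rel_self _ _,
      fun _ hθ _ _ => LatCon.rel_of_principal_rel hθ⟩,
    ⟨⊥, Sp.atom ⊥, Sp.bot_ne_atom bot_ne_top, LatCon.principal_rel_self _ _⟩, ?_⟩
  rintro θ ⟨X, Y, hXY, h⟩ _ _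
  exact LatCon.rel_of_principal_rel (θ.rel_bot_atom_bot_of_ne hXY h)
end
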